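/- arXiv:2503.14362 — 3 statements merged into one kernel-verified Lean document; each statement's English description precedes it below -/
import Mathlib

section
/- Let $(X,d)$ be a metric space on $x_1,\dots,x_n$ with positive total pairwise distance $T = \sum_{k=1}^n\sum_{j=1}^n d(x_k,x_j)$, and let $w_j \ge \frac{\sum_{k=1}^n d(x_j,x_k)}{T}$ for all $j$. Then for any point $c$ in the metric space and any $j$, $\frac{d(c,x_j)}{w_j} \le 8 \sum_{k=1}^n d(c,x_k)$. -/
open Finset

/-- For weights at least the normalized sums of distances, the importance-sampling ratio
`d(c, x j) / w j` is at most `8` times the sum of distances from `c` to the dataset. -/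
theorem stmt2 {X : Type*} [MetricSpace X] {n : ℕ} (x : Fin n → X)
    (w : Fin n → ℝ) (hw0 : ∀ i, 0 < w i) (hw1 : ∀ i, w i ≤ 1)
    (hT : 0 < ∑ k, ∑ j, dist (x k) (x j))
    (hlb : ∀ j, (∑ k, dist (x j) (x k)) / (∑ k, ∑ j', dist (x k) (x j')) ≤ w j)
    (c : X) (j : Fin n) :
    dist c (x j) / w j ≤ 8 * ∑ k, dist c (x k) := by
  set d := dist c (x j) with hd_def
  set S := ∑ k, dist c (x k) with hS_def
  set A := ∑ k, dist (x j) (x k) with hA_def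
  set T := ∑ k, ∑ j', dist (x k) (x j') with hT_def
  have hn' : (0:ℝ) < (n:ℝ) := by exact_mod_cast j.pos
  have hd0 : 0 ≤ d := dist_nonneg
  have hS0 : 0 ≤ S := Finset.sum_nonneg fun k _ => dist_nonneg
  have hA0 : 0 ≤ A := Finset.sum_nonneg fun k _ => dist_nonneg
  have hTA : T ≤ 2 * n * A := by
    have h1 : T ≤ ∑ k, ∑ l, (dist (x k) (x j) + dist (x j) (x l)) :=
      Finset.sum_le_sum fun k _ => Finset.sum_le_sum fun l _ => dist_triangle _ _ _
    have h2 : ∑ k, ∑ l, (dist (x k) (x j) + dist (x j) (x l))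
        = (n:ℝ) * A + (n:ℝ) * A := by
      simp [Finset.sum_add_distrib, Finset.sum_const, Finset.card_univ,
        nsmul_eq_mul, Finset.mul_sum, dist_comm, hA_def]
    linarith
  have hTS : T ≤ 2 * n * S := by
    have h1 : T ≤ ∑ k, ∑ l, (dist (x k) c + dist c (x l)) :=
      Finset.sum_le_sum fun k _ => Finset.sum_le_sum fun l _ => dist_triangle _ _ _
    have h2 : ∑ k, ∑ l, (dist (x k) c + dist c (x l))
        = (n:ℝ) * S + (n:ℝ) * S := by
      simp [Finset.sum_add_distrib, Finset.sum_const, Finset.card_univ,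
        nsmul_eq_mul, Finset.mul_sum, dist_comm, hS_def]
    linarith
  have hndA : (n:ℝ) * d ≤ S + A := by
    have h1 : ∑ _k : Fin n, d ≤ ∑ k, (dist c (x k) + dist (x k) (x j)) :=
      Finset.sum_le_sum fun k _ => dist_triangle _ _ _
    have h2 : ∑ _k : Fin n, d = (n:ℝ) * d := by
      simp [Finset.sum_const, Finset.card_univ, nsmul_eq_mul]
    have h3 : ∑ k, (dist c (x k) + dist (x k) (x j)) = S + A := by
      simp [Finset.sum_add_distrib, hS_def, hA_def, dist_comm]
    linarith
  have hA : 0 < A := by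
    rcases hA0.lt_or_eq with h | h
    · exact h
    · exfalso
      rw [← h] at hTA
      simp at hTA
      linarith
  have hAT : 0 < A / T := div_pos hA hT
  have h1 : 1 / w j ≤ T / A := by
    have := one_div_le_one_div_of_le hAT (hlb j)
    rwa [one_div_div] at this
  have hmain : d / w j ≤ d * (T / A) := by
    rw [div_eq_mul_one_div]
    exact mul_le_mul_of_nonneg_left h1 hd0
  have key : (n:ℝ) * (d * T) ≤ (n:ℝ) * (4 * S * A) := by
    have e1 : (n:ℝ) * d * T ≤ (S + A) * T := mul_le_mul_of_nonneg_right hndA hT.le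
    have e2 : S * T ≤ S * (2 * n * A) := mul_le_mul_of_nonneg_left hTA hS0
    have e3 : A * T ≤ A * (2 * n * S) := mul_le_mul_of_nonneg_left hTS hA0
    nlinarith [e1, e2, e3]
  have key2 : d * T ≤ 4 * S * A := le_of_mul_le_mul_left key hn'
  have hfin : d * (T / A) ≤ 8 * S := by
    rw [mul_div_assoc', div_le_iff₀ hA]
    nlinarith
  linarith
end

section
/- Let $p_1, p_2 \in [0,1]$ with $p_1 + p_2 \le 1$, and let $\alpha_1,\alpha_2 \le 0$ and $\beta_1,\beta_2 \ge 0$. Define the joint random pair $(X_1,X_2)$ which equals $(\alpha_1,\beta_2)$ with probability $p_1$, $(\beta_1,\alpha_2)$ with probability $p_2$, and $(\beta_1,\beta_2)$ otherwise. If $\mathbb{E}[X_1] = \mathbb{E}[X_2] = 0$, then $\mathbb{E}[X_1 X_2] \le 0$. -/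
/-- For the three-outcome joint distribution with `α`s nonpositive and `β`s nonnegative,
if both marginals have mean zero then the expectation of the product is nonpositive. -/
theorem stmt7 (p1 p2 : ℝ) (hp1 : 0 ≤ p1) (hp2 : 0 ≤ p2) (hsum : p1 + p2 ≤ 1)
    (a1 a2 b1 b2 : ℝ) (ha1 : a1 ≤ 0) (ha2 : a2 ≤ 0) (hb1 : 0 ≤ b1) (hb2 : 0 ≤ b2)
    (hE1 : p1 * a1 + (1 - p1) * b1 = 0) (hE2 : p2 * a2 + (1 - p2) * b2 = 0) :
    p1 * (a1 * b2) + p2 * (b1 * a2) + (1 - p1 - p2) * (b1 * b2) ≤ 0 := by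
  nlinarith [mul_nonneg hb1 hb2, congrArg (· * b2) hE1, congrArg (· * b1) hE2, mul_nonneg hb1 hb2]
end

section
/- Let $t \ge 2$ be an integer, let $p \in (0, 1/2]$ and $\gamma' \in (0,1]$, and let $a, g, z \in [0,1]$ with $p \le 1/t$. Let $A \sim \mathrm{Ber}(p)$ and $K \sim \mathrm{Ber}(\gamma')$ be independent, and define the random variable $Y$ as follows: if $A = 1$ then $Y = \left(1 - \frac{A K}{t p \gamma'}\right) g - \frac{t-1}{t} a$ (with $AK$ evaluated on the realization), and if $A = 0$ then $Y = \frac{1}{1-p}\left(\frac{t-1}{t} a + \frac{1}{t} g - p g\right) - \frac{t-1}{t} a$. Then $\mathbb{E}[Y^2] \le \frac{30}{t^2 \, p \, \gamma'}$. -/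
/-! In the first branch the increment lies in `[-1/(t p γ'), 0]`; in the second both `g` and
`(t-1)/t · a` lie in `[0, 1]`; in the third the increment equals `(p c + (1/t - p) g)/(1 - p)` with
`c = (t-1)/t · a`, a combination of `c, g ∈ [0, 1]` with nonnegative weights summing to `1/t`.
Weighting by the branch probabilities gives `1 + 1 + 2` times `1/(t² p γ')`. -/

open Set

lemma sq_one_sub_mul_sub_le_sq {r g c : ℝ} (hr : 1 ≤ r) (hg : g ∈ Icc 0 1)
    (hc : c ∈ Icc 0 1) : ((1 - r) * g - c) ^ 2 ≤ r ^ 2 := by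
  obtain ⟨hg0, hg1⟩ := hg
  obtain ⟨hc0, hc1⟩ := hc
  apply sq_le_sq'
  · nlinarith
  · nlinarith

lemma sq_sub_le_one_of_mem_Icc {x y : ℝ} (hx : x ∈ Icc 0 1) (hy : y ∈ Icc 0 1) :
    (x - y) ^ 2 ≤ 1 :=
  (sq_le_one_iff_abs_le_one _).2 (abs_sub_le_of_nonneg_of_le hx.1 hx.2 hy.1 hy.2)

lemma sq_mul_add_sub_mul_le_sq {p u c g : ℝ} (hp : 0 ≤ p) (hpu : p ≤ u) (hc : c ∈ Icc 0 1)
    (hg : g ∈ Icc 0 1) : (p * c + (u - p) * g) ^ 2 ≤ u ^ 2 := by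
  obtain ⟨hc0, hc1⟩ := hc
  obtain ⟨hg0, hg1⟩ := hg
  apply sq_le_sq'
  · nlinarith
  · nlinarith

lemma one_sub_mul_sq_one_div_one_sub_mul_sub_le {p u c g : ℝ} (hp0 : 0 ≤ p) (hp : p ≤ 1 / 2)
    (hpu : p ≤ u) (hc : c ∈ Icc 0 1) (hg : g ∈ Icc 0 1) :
    (1 - p) * (1 / (1 - p) * (c + u * g - p * g) - c) ^ 2 ≤ 2 * u ^ 2 := by
  have h1p : 0 < 1 - p := by linarith
  have hrw : (1 - p) * (1 / (1 - p) * (c + u * g - p * g) - c) ^ 2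
      = (p * c + (u - p) * g) ^ 2 / (1 - p) := by
    field_simp
    ring
  rw [hrw, div_le_iff₀ h1p]
  calc (p * c + (u - p) * g) ^ 2 ≤ u ^ 2 := sq_mul_add_sub_mul_le_sq hp0 hpu hc hg
    _ ≤ 2 * u ^ 2 * (1 - p) := by nlinarith [sq_nonneg u]

lemma mul_mul_sq_one_sub_one_div_mul_sub_le {t p γ g c : ℝ} (ht : 0 < t) (hp : 0 < p)
    (hγ : 0 < γ) (hq : t * p * γ ≤ 1) (hg : g ∈ Icc 0 1) (hc : c ∈ Icc 0 1) :
    p * γ * ((1 - 1 / (t * p * γ)) * g - c) ^ 2 ≤ 1 / (t ^ 2 * p * γ) := by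
  have hr : 1 ≤ 1 / (t * p * γ) := by rwa [le_div_iff₀ (by positivity), one_mul]
  calc _ ≤ p * γ * (1 / (t * p * γ)) ^ 2 :=
        mul_le_mul_of_nonneg_left (sq_one_sub_mul_sub_le_sq hr hg hc) (by positivity)
    _ = 1 / (t ^ 2 * p * γ) := by field_simp

lemma le_one_div_sq_mul_mul {t p γ : ℝ} (ht : 0 < t) (hp : 0 < p) (hγ0 : 0 < γ)
    (hγ1 : γ ≤ 1) (htp : t * p ≤ 1) : p ≤ 1 / (t ^ 2 * p * γ) := by
  rw [le_div_iff₀ (by positivity)]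
  calc p * (t ^ 2 * p * γ) = (t * p) ^ 2 * γ := by ring
    _ ≤ 1 := mul_le_one₀ (pow_le_one₀ (by positivity) htp) hγ0.le hγ1

lemma one_div_sq_le_one_div_sq_mul_mul {t p γ : ℝ} (ht : 0 < t) (hp : 0 < p) (hγ : 0 < γ)
    (hpγ : p * γ ≤ 1) : 1 / t ^ 2 ≤ 1 / (t ^ 2 * p * γ) := by
  rw [mul_assoc]
  exact one_div_le_one_div_of_le (by positivity) (mul_le_of_le_one_right (by positivity) hpγ)

theorem stmt17_general (t : ℕ) (ht : 2 ≤ t) (p γ' : ℝ) (hp0 : 0 < p)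
    (hpt : p ≤ 1 / (t : ℝ)) (hγ0 : 0 < γ') (hγ1 : γ' ≤ 1)
    (a g : ℝ) (ha : a ∈ Set.Icc (0:ℝ) 1) (hg : g ∈ Set.Icc (0:ℝ) 1) :
    p * γ' * ((1 - 1 / ((t : ℝ) * p * γ')) * g - ((t : ℝ) - 1) / t * a) ^ 2
      + p * (1 - γ') * (g - ((t : ℝ) - 1) / t * a) ^ 2
      + (1 - p) * ((1 / (1 - p)) * (((t : ℝ) - 1) / t * a + (1 / t) * g - p * g)
            - ((t : ℝ) - 1) / t * a) ^ 2
      ≤ 30 / ((t : ℝ) ^ 2 * p * γ') := by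
  have ht2 : (2 : ℝ) ≤ t := by exact_mod_cast ht
  have htp : t * p ≤ 1 := by rwa [le_div_iff₀' (by positivity)] at hpt
  have hp : p ≤ 1 / 2 := hpt.trans (by gcongr)
  have hc : ((t : ℝ) - 1) / t * a ∈ Icc 0 1 := by
    have : ((t : ℝ) - 1) / t ∈ Icc 0 1 :=
      ⟨by bound, by rw [div_le_one (by positivity)]; linarith⟩
    exact ⟨mul_nonneg this.1 ha.1, mul_le_one₀ this.2 ha.1 ha.2⟩
  calc _ ≤ 1 / ((t : ℝ) ^ 2 * p * γ') + p + 2 * (1 / (t : ℝ)) ^ 2 := by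
        refine add_le_add (add_le_add ?_ ?_) ?_
        · exact mul_mul_sq_one_sub_one_div_mul_sub_le (by positivity) hp0 hγ0
            (by nlinarith) hg hc
        · exact (mul_le_of_le_one_right (mul_nonneg hp0.le (by linarith))
            (sq_sub_le_one_of_mem_Icc hg hc)).trans (mul_le_of_le_one_right hp0.le (by linarith))
        · exact one_sub_mul_sq_one_div_one_sub_mul_sub_le hp0.le hp hpt hc hg
    _ ≤ 1 / ((t : ℝ) ^ 2 * p * γ') + 1 / ((t : ℝ) ^ 2 * p * γ')
        + 2 * (1 / ((t : ℝ) ^ 2 * p * γ')) := by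
      rw [div_pow, one_pow]
      have hpD := le_one_div_sq_mul_mul (by positivity) hp0 hγ0 hγ1 htp
      have htD := one_div_sq_le_one_div_sq_mul_mul (t := t) (by positivity) hp0 hγ0 (by nlinarith)
      gcongr
    _ ≤ 30 / ((t : ℝ) ^ 2 * p * γ') := by
      rw [mul_one_div, ← add_div, ← add_div]
      gcongr
      norm_num

/-- Single-step second-moment bound for the error increment of the subsampled greedy
estimator for a not-yet-activated point: averaging over the independent Bernoulli
draws `A ~ Ber(p)` and `K ~ Ber(γ')`, the expected square of the increment is at
most `30 / (t² p γ')`. -/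
theorem stmt17 (t : ℕ) (ht : 2 ≤ t) (p γ' : ℝ) (hp0 : 0 < p) (hp : p ≤ 1 / 2)
    (hpt : p ≤ 1 / (t : ℝ)) (hγ0 : 0 < γ') (hγ1 : γ' ≤ 1)
    (a g z : ℝ) (ha : a ∈ Set.Icc (0:ℝ) 1) (hg : g ∈ Set.Icc (0:ℝ) 1)
    (hz : z ∈ Set.Icc (0:ℝ) 1) :
    p * γ' * ((1 - 1 / ((t : ℝ) * p * γ')) * g - ((t : ℝ) - 1) / t * a) ^ 2
      + p * (1 - γ') * (g - ((t : ℝ) - 1) / t * a) ^ 2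
      + (1 - p) * ((1 / (1 - p)) * (((t : ℝ) - 1) / t * a + (1 / t) * g - p * g)
            - ((t : ℝ) - 1) / t * a) ^ 2
      ≤ 30 / ((t : ℝ) ^ 2 * p * γ') :=
  stmt17_general t ht p γ' hp0 hpt hγ0 hγ1 a g ha hg
end
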